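/- Let s_1,…,s_k be supply vectors on a capacitated undirected graph G=(V,E,c) such that each s_i has a dominant entry, i.e., its master source w_i ∈ argmax_{v∈V} |s_i(v)| satisfies |s_i(w_i)| ≥ Σ_{v≠w_i} |s_i(v)|. Then λ(G; s_1∘w_1,…,s_k∘w_k) = λ(G; s_1,…,s_k); that is, choosing master sources as targets exactly solves the target location problem. In particular this holds whenever every supply vector has at most two sources. -/

import Mathlib

open Finset

/-- A flow `f` on an (arbitrarily oriented) undirected graph satisfies the
demand vector `d` if at every vertex the net inflow equals the demand. -/
def satisfiesFlow {V E : Type*} [Fintype E] [DecidableEq V]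
    (hd tl : E → V) (f : E → ℝ) (d : V → ℝ) : Prop :=
  ∀ v : V, d v = (∑ e : E, if hd e = v then f e else 0)
      - (∑ e : E, if tl e = v then f e else 0)

/-- `assign s v` is the demand vector `s ∘ v` obtained from the supply vector `s`
by making `v` the target: it agrees with `s` off `v` and has value
`-∑_{u ≠ v} s u` at `v`. -/
def assign {V : Type*} [Fintype V] [DecidableEq V] (s : V → ℝ) (v : V) : V → ℝ :=
  fun u => if u = v then -(∑ w ∈ univ.erase v, s w) else s u

/-- The optimum of the maximum concurrent multi-commodity flow problem for
demand vectors `d i` on the capacitated graph given by `hd`, `tl`, `c`: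
the largest `l ≥ 0` such that some valid multi-commodity flow satisfies `l • d i`
for all `i`. -/
noncomputable def lamD {V E ι : Type*} [Fintype V] [Fintype E] [Fintype ι] [DecidableEq V]
    (hd tl : E → V) (c : E → ℝ) (d : ι → V → ℝ) : ℝ :=
  sSup {l : ℝ | 0 ≤ l ∧ ∃ f : ι → E → ℝ,
    (∀ e, ∑ i, |f i e| ≤ c e) ∧
    ∀ i, satisfiesFlow hd tl (f i) (fun v => l * d i v)}

/-- The optimum of the target location problem LoMuF for supply vectors `s i`:
the best value of `lamD` over all choices of targets. -/
noncomputable def lamS {V E ι : Type*} [Fintype V] [Fintype E] [Fintype ι] [DecidableEq V]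
    (hd tl : E → V) (c : E → ℝ) (s : ι → V → ℝ) : ℝ :=
  sSup {l : ℝ | 0 ≤ l ∧ ∃ (v : ι → V) (f : ι → E → ℝ),
    (∀ e, ∑ i, |f i e| ≤ c e) ∧
    ∀ i, satisfiesFlow hd tl (f i) (fun u => l * assign (s i) (v i) u)}

/-!
Given any targets, every commodity can be moved to its master source without increasing its
flow on any edge. Let `f` satisfy `s ∘ A`, and let `T = -∑ u, s u` be the total supply. Every
vertex except `A` is a source, so by flow decomposition some conformal part `p` of `f`
(edgewise `p = t f` with `t ∈ [0, 1]`) carries `T / 2` from the master source `B` to `A`; this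
amount is available at `B` because dominance says exactly `T ≤ 2 |s B|`. Since
`s ∘ A - s ∘ B = T (δ_A - δ_B)`, the flow `f - 2 p` satisfies `s ∘ B`, and `|f - 2 p| ≤ |f|`.
-/

open Function Relation

section Flows

variable {V E : Type*} [Fintype E] [DecidableEq V] (hd tl : E → V)

def netInflow : (E → ℝ) →ₗ[ℝ] (V → ℝ) where
  toFun f v := (∑ e, if hd e = v then f e else 0) - ∑ e, if tl e = v then f e else 0
  map_add' f g := by
    funext v
    simp only [Pi.add_apply, ite_add_zero, sum_add_distrib]
    ring
  map_smul' a f := by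
    funext v
    simp only [Pi.smul_apply, smul_eq_mul, RingHom.id_apply, mul_sub, mul_sum, mul_ite, mul_zero]

variable {hd tl}

theorem satisfiesFlow_iff {f : E → ℝ} {d : V → ℝ} :
    satisfiesFlow hd tl f d ↔ netInflow hd tl f = d := by
  rw [funext_iff]
  exact forall_congr' fun _ => eq_comm

variable (hd tl)

theorem netInflow_single [DecidableEq E] (e : E) (x : ℝ) :
    netInflow hd tl (Pi.single e x) = x • (Pi.single (hd e) 1 - Pi.single (tl e) 1) := by
  funext v
  simp only [netInflow, LinearMap.coe_mk, AddHom.coe_mk]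
  rw [Fintype.sum_eq_single e fun _ h => by simp [h],
    Fintype.sum_eq_single e fun _ h => by simp [h]]
  simp [Pi.single_apply, eq_comm, mul_sub]

theorem sum_netInflow (S : Finset V) (f : E → ℝ) :
    ∑ v ∈ S, netInflow hd tl f v
      = ∑ e, ((if hd e ∈ S then f e else 0) - if tl e ∈ S then f e else 0) := by
  simp only [netInflow, LinearMap.coe_mk, AddHom.coe_mk, sum_sub_distrib]
  rw [sum_comm, sum_comm (s := S)]
  simp [sum_ite_eq]

def FlowArc (f : E → ℝ) (u x : V) : Prop :=
  ∃ e, (0 < f e ∧ tl e = u ∧ hd e = x) ∨ (f e < 0 ∧ hd e = u ∧ tl e = x)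

variable {hd tl}

/-- A cut argument: the vertices reachable from `w` along `f` would have negative total demand
but nonnegative net inflow. -/
theorem reflTransGen_flowArc [Fintype V] {f : E → ℝ} {v w : V}
    (hsrc : ∀ u ≠ v, netInflow hd tl f u ≤ 0) (hw : netInflow hd tl f w < 0) :
    ReflTransGen (FlowArc hd tl f) w v := by
  classical
  by_contra hv
  set S := univ.filter (ReflTransGen (FlowArc hd tl f) w)
  have hclosed {u x : V} (hu : u ∈ S) (hux : FlowArc hd tl f u x) : x ∈ S := by
    simp only [S, mem_filter, mem_univ, true_and] at hu ⊢
    exact hu.tail hux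
  have hcut : 0 ≤ ∑ u ∈ S, netInflow hd tl f u := by
    rw [sum_netInflow]
    refine sum_nonneg fun e _ => ?_
    by_cases hhd : hd e ∈ S <;> by_cases htl : tl e ∈ S <;>
      simp only [hhd, htl, if_true, if_false, sub_self, sub_zero, zero_sub, neg_nonneg, le_refl]
    · by_contra! hneg
      exact htl (hclosed hhd ⟨e, .inr ⟨hneg, rfl, rfl⟩⟩)
    · by_contra! hpos
      exact hhd (hclosed htl ⟨e, .inl ⟨hpos, rfl, rfl⟩⟩)
  have hwS : w ∈ S := by simp [S, ReflTransGen.refl]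
  have hvS : v ∉ S := by simpa [S] using hv
  have hrest : ∑ u ∈ S.erase w, netInflow hd tl f u ≤ 0 :=
    sum_nonpos fun u hu => hsrc u fun h => hvS (h ▸ mem_of_mem_erase hu)
  rw [← add_sum_erase S _ hwS] at hcut
  linarith

end Flows

section Conformal

variable {E : Type*}

def IsConformal (p f : E → ℝ) : Prop := ∀ e, ∃ t, 0 ≤ t ∧ p e = t * f e

def IsConformalPart (p f : E → ℝ) : Prop := ∀ e, ∃ t ∈ Set.Icc (0 : ℝ) 1, p e = t * f e

variable {p q f : E → ℝ}

theorem IsConformal.zero (f : E → ℝ) : IsConformal 0 f := fun _ => ⟨0, le_rfl, by simp⟩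

theorem IsConformal.add (hp : IsConformal p f) (hq : IsConformal q f) : IsConformal (p + q) f :=
  fun e =>
    let ⟨s, hs, hpe⟩ := hp e
    let ⟨t, ht, hqe⟩ := hq e
    ⟨s + t, add_nonneg hs ht, by simp [hpe, hqe, add_mul]⟩

theorem IsConformal.smul {c : ℝ} (hc : 0 ≤ c) (hp : IsConformal p f) : IsConformal (c • p) f :=
  fun e =>
    let ⟨t, ht, hpe⟩ := hp e
    ⟨c * t, mul_nonneg hc ht, by simp [hpe, mul_assoc]⟩

theorem isConformal_single [DecidableEq E] (f : E → ℝ) (e : E) :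
    IsConformal (Pi.single e (f e)) f := by
  intro e'
  obtain rfl | he := eq_or_ne e' e
  · exact ⟨1, zero_le_one, by simp⟩
  · exact ⟨0, le_rfl, by simp [he]⟩

theorem IsConformalPart.zero (f : E → ℝ) : IsConformalPart 0 f :=
  fun _ => ⟨0, Set.left_mem_Icc.2 zero_le_one, by simp⟩

theorem IsConformalPart.smul {c : ℝ} (hc : c ∈ Set.Icc (0 : ℝ) 1) (hp : IsConformalPart p f) :
    IsConformalPart (c • p) f := fun e =>
  let ⟨t, ht, hpe⟩ := hp e
  ⟨c * t, ⟨mul_nonneg hc.1 ht.1, mul_le_one₀ hc.2 ht.1 ht.2⟩, by simp [hpe, mul_assoc]⟩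

theorem IsConformalPart.add_of_sub (hp : IsConformalPart p f) (hq : IsConformalPart q (f - p)) :
    IsConformalPart (p + q) f := fun e => by
  obtain ⟨s, ⟨hs₀, hs₁⟩, hpe⟩ := hp e
  obtain ⟨t, ⟨ht₀, ht₁⟩, hqe⟩ := hq e
  refine ⟨s + t * (1 - s), ⟨by nlinarith, by nlinarith⟩, ?_⟩
  simp only [Pi.add_apply, Pi.sub_apply] at hqe ⊢
  rw [hqe, hpe]
  ring

theorem IsConformalPart.support_sub_ssubset (hp : IsConformalPart p f) {e : E} (hfe : f e ≠ 0)
    (hpe : p e = f e) : support (f - p) ⊂ support f := by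
  refine ssubset_of_subset_not_subset (fun e' hfpe' hfe' => ?_) fun hsub => ?_
  · obtain ⟨t, -, hpe'⟩ := hp e'
    simp [hpe', hfe'] at hfpe'
  · exact hsub hfe (by simp [hpe])

theorem IsConformalPart.abs_sub_smul_le (hp : IsConformalPart p f) {c : ℝ}
    (hc : c ∈ Set.Icc (0 : ℝ) 2) (e : E) : |(f - c • p) e| ≤ |f e| := by
  obtain ⟨t, ⟨ht₀, ht₁⟩, hpe⟩ := hp e
  have hfactor : (f - c • p) e = (1 - c * t) * f e := by simp [hpe]; ring
  rw [hfactor, abs_mul]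
  refine mul_le_of_le_one_left (abs_nonneg _) (abs_le.2 ⟨?_, ?_⟩) <;> nlinarith [hc.1, hc.2]

end Conformal

section Routing

variable {V E : Type*} [Fintype E] [DecidableEq V] {hd tl : E → V}

theorem FlowArc.exists_isConformal_netInflow_eq [DecidableEq E] {f : E → ℝ} {y z : V}
    (h : FlowArc hd tl f y z) :
    ∃ r, IsConformal r f ∧ netInflow hd tl r = Pi.single z 1 - Pi.single y 1 := by
  obtain ⟨e, ⟨hpos, rfl, rfl⟩ | ⟨hneg, rfl, rfl⟩⟩ := h
  · refine ⟨(f e)⁻¹ • Pi.single e (f e), (isConformal_single f e).smul (inv_nonneg.2 hpos.le), ?_⟩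
    rw [map_smul, netInflow_single, smul_smul, inv_mul_cancel₀ hpos.ne', one_smul]
  · refine ⟨(-f e)⁻¹ • Pi.single e (f e), (isConformal_single f e).smul (by simp [hneg.le]), ?_⟩
    rw [map_smul, netInflow_single, smul_smul, inv_neg, neg_mul, inv_mul_cancel₀ hneg.ne,
      neg_smul, one_smul, neg_sub]

theorem Relation.ReflTransGen.exists_isConformal_netInflow_eq [DecidableEq E] {f : E → ℝ} {u x : V}
    (h : ReflTransGen (FlowArc hd tl f) u x) :
    ∃ q, IsConformal q f ∧ netInflow hd tl q = Pi.single x 1 - Pi.single u 1 := by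
  induction h with
  | refl => exact ⟨0, IsConformal.zero f, by simp⟩
  | @tail y z _ hyz ih =>
    obtain ⟨q, hq, hqflow⟩ := ih
    obtain ⟨r, hr, hrflow⟩ := hyz.exists_isConformal_netInflow_eq
    refine ⟨q + r, hq.add hr, ?_⟩
    rw [map_add, hqflow, hrflow]
    abel

/-- Scale a conformal path flow from `w` to `v` so that it saturates one edge of `f`. -/
theorem exists_isConformalPart_saturating [Fintype V] {f : E → ℝ} {v w : V} (hwv : w ≠ v)
    (hsrc : ∀ u ≠ v, netInflow hd tl f u ≤ 0) (hw : netInflow hd tl f w < 0) :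
    ∃ ε > (0 : ℝ), ∃ p, IsConformalPart p f ∧
      netInflow hd tl p = ε • (Pi.single v 1 - Pi.single w 1) ∧ ∃ e, f e ≠ 0 ∧ p e = f e := by
  classical
  obtain ⟨q, hq, hqflow⟩ := (reflTransGen_flowArc hsrc hw).exists_isConformal_netInflow_eq
  choose t ht hqt using hq
  have hsupp : (univ.filter fun e => q e ≠ 0).Nonempty := by
    by_contra! hempty
    have hq0 : q = 0 := funext fun e => by simpa using filter_eq_empty_iff.1 hempty (mem_univ e)
    simpa [hq0, hwv] using congr_fun hqflow v
  obtain ⟨e₀, he₀, hmax⟩ := exists_max_image _ t hsupp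
  have hq₀ : q e₀ ≠ 0 := (mem_filter.1 he₀).2
  have ht₀ : 0 < t e₀ := (ht e₀).lt_of_ne fun h => hq₀ (by simp [hqt, ← h])
  have hf₀ : f e₀ ≠ 0 := fun h => hq₀ (by simp [hqt, h])
  refine ⟨(t e₀)⁻¹, inv_pos.2 ht₀, (t e₀)⁻¹ • q, fun e => ?_, by rw [map_smul, hqflow], e₀, hf₀,
    by simp [hqt, ht₀.ne']⟩
  by_cases hqe : q e = 0
  · exact ⟨0, Set.left_mem_Icc.2 zero_le_one, by simp [hqe]⟩
  · refine ⟨t e / t e₀, ⟨div_nonneg (ht e) ht₀.le, div_le_one_of_le₀ ?_ ht₀.le⟩, ?_⟩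
    · exact hmax e (by simp [hqe])
    · simp only [Pi.smul_apply, smul_eq_mul, hqt]
      ring

theorem exists_isConformalPart_netInflow_eq [Fintype V] {v w : V} (hwv : w ≠ v) (f : E → ℝ)
    {a : ℝ} (ha : 0 ≤ a) (hsrc : ∀ u ≠ v, netInflow hd tl f u ≤ 0)
    (haw : a ≤ -netInflow hd tl f w) :
    ∃ p, IsConformalPart p f ∧ netInflow hd tl p = a • (Pi.single v 1 - Pi.single w 1) := by
  -- Peel off saturating path flows; each one shrinks the support of `f`.
  induction hn : (support f).ncard using Nat.strong_induction_on generalizing f a with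
  | _ n ih =>
  obtain rfl | ha := ha.eq_or_lt
  · exact ⟨0, IsConformalPart.zero f, by simp⟩
  obtain ⟨ε, hε, P, hP, hPflow, e, hfe, hPe⟩ :=
    exists_isConformalPart_saturating hwv hsrc (by linarith)
  by_cases haε : a ≤ ε
  · refine ⟨(a / ε) • P, hP.smul ⟨by positivity, div_le_one_of_le₀ haε hε.le⟩, ?_⟩
    rw [map_smul, hPflow, smul_smul, div_mul_cancel₀ _ hε.ne']
  have hflow : netInflow hd tl (f - P)
      = netInflow hd tl f - ε • (Pi.single v 1 - Pi.single w 1) := by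
    rw [map_sub, hPflow]
  have hsrc' : ∀ u ≠ v, netInflow hd tl (f - P) u ≤ 0 := fun u hu => by
    have := hsrc u hu
    rw [hflow]
    by_cases huw : u = w <;> simp [hu, huw, hwv] <;> linarith
  have haw' : a - ε ≤ -netInflow hd tl (f - P) w := by
    simp only [hflow, Pi.sub_apply, Pi.smul_apply, Pi.single_apply, hwv, if_true, if_false,
      smul_eq_mul]
    linarith
  obtain ⟨p, hp, hpflow⟩ := ih _ (hn ▸ Set.ncard_lt_ncard (hP.support_sub_ssubset hfe hPe))
    (f - P) (by linarith) hsrc' haw' rfl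
  refine ⟨P + p, hP.add_of_sub hp, ?_⟩
  rw [map_add, hPflow, hpflow, ← add_smul, add_sub_cancel]

end Routing

section Retarget

variable {V E : Type*} [Fintype V] [DecidableEq V]

theorem assign_sub_assign (s : V → ℝ) (A B : V) :
    assign s A - assign s B = (-∑ u, s u) • (Pi.single A 1 - Pi.single B 1) := by
  have hA := add_sum_erase univ s (mem_univ A)
  have hB := add_sum_erase univ s (mem_univ B)
  funext u
  simp only [assign, Pi.sub_apply, Pi.smul_apply, Pi.single_apply, smul_eq_mul]
  split_ifs <;> subst_vars <;> linarith

theorem exists_netInflow_eq_assign_of_dominant [Fintype E] {hd tl : E → V} {σ : V → ℝ}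
    (hσ : ∀ u, σ u ≤ 0) {B : V} (hdom : ∑ u ∈ univ.erase B, |σ u| ≤ |σ B|) {l : ℝ} (hl : 0 ≤ l)
    {A : V} {f : E → ℝ} (hf : netInflow hd tl f = l • assign σ A) :
    ∃ g, netInflow hd tl g = l • assign σ B ∧ ∀ e, |g e| ≤ |f e| := by
  obtain rfl | hAB := eq_or_ne A B
  · exact ⟨f, hf, fun _ => le_rfl⟩
  set T := -∑ u, σ u with hT
  have htotal : T ≤ 2 * -σ B := by
    rw [hT, ← add_sum_erase univ σ (mem_univ B)]
    have : ∑ u ∈ univ.erase B, |σ u| = -∑ u ∈ univ.erase B, σ u := by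
      rw [← sum_neg_distrib]
      exact sum_congr rfl fun u _ => abs_of_nonpos (hσ u)
    rw [abs_of_nonpos (hσ B)] at hdom
    linarith
  have hsrc : ∀ u ≠ A, netInflow hd tl f u ≤ 0 := fun u hu => by
    simpa [hf, assign, hu] using mul_nonpos_of_nonneg_of_nonpos hl (hσ u)
  have hB : l * T / 2 ≤ -netInflow hd tl f B := by
    simp only [hf, Pi.smul_apply, assign, hAB.symm, if_false, smul_eq_mul]
    nlinarith
  obtain ⟨p, hp, hpflow⟩ := exists_isConformalPart_netInflow_eq hAB.symm f
    (by have : 0 ≤ T := neg_nonneg.2 (sum_nonpos fun u _ => hσ u); positivity) hsrc hB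
  refine ⟨f - (2 : ℝ) • p, ?_, hp.abs_sub_smul_le ⟨zero_le_two, le_rfl⟩⟩
  rw [map_sub, map_smul, hf, hpflow, smul_smul, mul_div_cancel₀ _ two_ne_zero, mul_smul,
    ← assign_sub_assign, smul_sub, sub_sub_cancel]

end Retarget

theorem dominant_entry_exact_general {V E ι : Type*} [Fintype V] [Fintype E] [Fintype ι]
    [DecidableEq V]
    (hd tl : E → V) (c : E → ℝ)
    (s : ι → V → ℝ) (hs : ∀ i v, s i v ≤ 0)
    (w : ι → V)
    (hdom : ∀ i, ∑ v ∈ univ.erase (w i), |s i v| ≤ |s i (w i)|) :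
    lamD hd tl c (fun i => assign (s i) (w i)) = lamS hd tl c s := by
  unfold lamD lamS
  congr 1
  ext l
  refine ⟨fun ⟨hl, f, hcap, hf⟩ => ⟨hl, w, f, hcap, hf⟩, fun ⟨hl, v, f, hcap, hf⟩ => ⟨hl, ?_⟩⟩
  have hretarget (i : ι) : ∃ g : E → ℝ,
      satisfiesFlow hd tl g (fun u => l * assign (s i) (w i) u) ∧ ∀ e, |g e| ≤ |f i e| := by
    obtain ⟨g, hg, hgf⟩ :=
      exists_netInflow_eq_assign_of_dominant (hs i) (hdom i) hl (satisfiesFlow_iff.1 (hf i))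
    exact ⟨g, satisfiesFlow_iff.2 hg, hgf⟩
  choose g hg hgf using hretarget
  exact ⟨g, fun e => (sum_le_sum fun i _ => hgf i e).trans (hcap e), hg⟩

/-- Corollary: when every supply vector has a dominant entry (its master source
`w i` satisfies `|s i (w i)| ≥ ∑_{v ≠ w i} |s i v|`), choosing the master sources
as targets exactly solves LoMuF. -/
theorem dominant_entry_exact {V E ι : Type*} [Fintype V] [Fintype E] [Fintype ι]
    [DecidableEq V]
    (hd tl : E → V) (c : E → ℝ) (hc : ∀ e, 0 ≤ c e)
    (s : ι → V → ℝ) (hs : ∀ i v, s i v ≤ 0)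
    (w : ι → V) (hw : ∀ i v, |s i v| ≤ |s i (w i)|)
    (hdom : ∀ i, ∑ v ∈ univ.erase (w i), |s i v| ≤ |s i (w i)|) :
    lamD hd tl c (fun i => assign (s i) (w i)) = lamS hd tl c s :=
  dominant_entry_exact_general hd tl c s hs w hdom
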